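/- arXiv:1611.09329 — 7 statements merged into one kernel-verified Lean document; each statement's English description precedes it below -/
import Mathlib

section
/- Let c : ℝ^d → (0,∞) be bounded and satisfy lim_{|x|→∞} sup_{|y|≤r} |c(x+y)/c(x) − 1| = 0 for every r > 0, and let f ∈ L¹(ℝ^d) be nonnegative with ∫ f > 0. Then there exists D > 0 such that (c∗f)(x) ≥ D·c(x) for all x ∈ ℝ^d, provided c∗f is continuous and strictly positive on compact sets. -/
open MeasureTheory

theorem conv_global_lower_bound (d : ℕ) (c f : EuclideanSpace ℝ (Fin d) → ℝ)
    (hc_pos : ∀ x, 0 < c x) (hc_bdd : ∃ M, ∀ x, c x ≤ M)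
    (hc_lt : ∀ r > (0 : ℝ), ∀ ε > (0 : ℝ), ∃ R : ℝ, ∀ x : EuclideanSpace ℝ (Fin d),
      R ≤ ‖x‖ → ∀ y : EuclideanSpace ℝ (Fin d), ‖y‖ ≤ r →
        |c (x + y) / c x - 1| ≤ ε)
    (hf_int : Integrable f) (hf_nonneg : ∀ x, 0 ≤ f x)
    (hf_pos : 0 < ∫ y, f y)
    (hconv_cont : Continuous fun x => ∫ y, c (x - y) * f y)
    (hconv_pos : ∀ x, 0 < ∫ y, c (x - y) * f y) :
    ∃ D > (0 : ℝ), ∀ x : EuclideanSpace ℝ (Fin d),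
      D * c x ≤ ∫ y, c (x - y) * f y := by
  obtain ⟨M, hM⟩ := hc_bdd
  have hM0 : 0 < M := lt_of_lt_of_le (hc_pos 0) (hM 0)
  -- Step 1: find r > 0 with positive integral of f on closedBall 0 r
  have h1 : ∃ r > (0:ℝ), 0 < ∫ y in Metric.closedBall (0 : EuclideanSpace ℝ (Fin d)) r, f y := by
    have hmono : Monotone (fun n : ℕ => Metric.closedBall (0 : EuclideanSpace ℝ (Fin d)) n) := by
      intro m n hmn
      exact Metric.closedBall_subset_closedBall (by exact_mod_cast hmn)
    have hunion : (⋃ n : ℕ, Metric.closedBall (0 : EuclideanSpace ℝ (Fin d)) n) = Set.univ := by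
      ext y
      simp only [Set.mem_iUnion, Metric.mem_closedBall, Set.mem_univ, iff_true]
      obtain ⟨n, hn⟩ := exists_nat_ge (dist y 0)
      exact ⟨n, hn⟩
    have hT := MeasureTheory.tendsto_setIntegral_of_monotone
      (fun n => measurableSet_closedBall) hmono hf_int.integrableOn
    rw [hunion, setIntegral_univ] at hT
    have := (hT.eventually (eventually_gt_nhds hf_pos)).exists
    obtain ⟨n, hn⟩ := this
    refine ⟨(n : ℝ) + 1, by positivity, lt_of_lt_of_le hn ?_⟩
    refine setIntegral_mono_set hf_int.integrableOn
      (Filter.Eventually.of_forall fun y => hf_nonneg y)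
      (Filter.Eventually.of_forall ?_)
    exact Metric.closedBall_subset_closedBall (by linarith)
  obtain ⟨r, hr, hI⟩ := h1
  set I : ℝ := ∫ y in Metric.closedBall (0 : EuclideanSpace ℝ (Fin d)) r, f y with hIdef
  -- Step 2: far-field lower bound
  obtain ⟨R₀, hR₀⟩ := hc_lt r hr (1/2) (by norm_num)
  set R : ℝ := max R₀ 1 with hRdef
  have hint : ∀ x : EuclideanSpace ℝ (Fin d), Integrable (fun y => c (x - y) * f y) := by
    intro x
    by_contra h
    have := hconv_pos x
    rw [integral_undef h] at this
    exact lt_irrefl 0 this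
  have hconv_nonneg : ∀ x y : EuclideanSpace ℝ (Fin d), 0 ≤ c (x - y) * f y :=
    fun x y => mul_nonneg (hc_pos _).le (hf_nonneg y)
  have hfar : ∀ x : EuclideanSpace ℝ (Fin d), R ≤ ‖x‖ →
      c x / 2 * I ≤ ∫ y, c (x - y) * f y := by
    intro x hx
    have hbound : ∀ y ∈ Metric.closedBall (0 : EuclideanSpace ℝ (Fin d)) r,
        c x / 2 ≤ c (x - y) := by
      intro y hy
      have hy' : ‖(-y : EuclideanSpace ℝ (Fin d))‖ ≤ r := by
        rw [norm_neg]; exact mem_closedBall_zero_iff.mp hy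
      have h := hR₀ x (le_trans (le_max_left _ _) hx) (-y) hy'
      have h2 : -(1/2 : ℝ) ≤ c (x + -y) / c x - 1 := (abs_le.mp h).1
      have h3 : (1/2 : ℝ) ≤ c (x + -y) / c x := by linarith
      have h4 : (1/2 : ℝ) * c x ≤ c (x + -y) := (le_div_iff₀ (hc_pos x)).mp h3
      rw [← sub_eq_add_neg] at h4
      linarith
    calc c x / 2 * I = ∫ y in Metric.closedBall (0 : EuclideanSpace ℝ (Fin d)) r,
          c x / 2 * f y := by rw [integral_const_mul]
      _ ≤ ∫ y in Metric.closedBall (0 : EuclideanSpace ℝ (Fin d)) r, c (x - y) * f y := by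
          refine setIntegral_mono_on ((hf_int.const_mul _).integrableOn)
            (hint x).integrableOn measurableSet_closedBall ?_
          intro y hy
          exact mul_le_mul_of_nonneg_right (hbound y hy) (hf_nonneg y)
      _ ≤ ∫ y, c (x - y) * f y :=
          setIntegral_le_integral (hint x)
            (Filter.Eventually.of_forall fun y => hconv_nonneg x y)
  -- Step 3: compact part
  have hKc : IsCompact (Metric.closedBall (0 : EuclideanSpace ℝ (Fin d)) R) :=
    isCompact_closedBall _ _
  have hKne : (Metric.closedBall (0 : EuclideanSpace ℝ (Fin d)) R).Nonempty :=
    ⟨0, by simp [hRdef]⟩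
  obtain ⟨x₀, hx₀K, hx₀min⟩ := hKc.exists_isMinOn hKne hconv_cont.continuousOn
  set m : ℝ := ∫ y, c (x₀ - y) * f y with hmdef
  have hm : 0 < m := hconv_pos x₀
  refine ⟨min (I / 2) (m / M), lt_min (by positivity) (by positivity), ?_⟩
  intro x
  rcases le_or_gt R ‖x‖ with hx | hx
  · calc min (I / 2) (m / M) * c x ≤ I / 2 * c x :=
        mul_le_mul_of_nonneg_right (min_le_left _ _) (hc_pos x).le
      _ = c x / 2 * I := by ring
      _ ≤ ∫ y, c (x - y) * f y := hfar x hx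
  · have hxK : x ∈ Metric.closedBall (0 : EuclideanSpace ℝ (Fin d)) R := by
      simp [Metric.mem_closedBall, dist_zero_right]
      exact le_of_lt (lt_of_lt_of_le hx (le_refl _)) |>.trans (le_refl _) |>.trans (le_refl _)
    calc min (I / 2) (m / M) * c x ≤ m / M * c x :=
        mul_le_mul_of_nonneg_right (min_le_right _ _) (hc_pos x).le
      _ ≤ m / M * M := mul_le_mul_of_nonneg_left (hM x) (by positivity)
      _ = m := by field_simp
      _ ≤ ∫ y, c (x - y) * f y := hx₀min hxK
end

section
/- Let b : ℝ≥0 → (0,∞) be nonincreasing on [ρ,∞) for some ρ ≥ 0 and long-tailed (b(s+τ)/b(s) → 1 as s→∞ for every τ ≥ 0). Define c : ℝ^d → (0,∞) by c(x) = b(|x|). Then for every r > 0, lim_{|x|→∞} sup_{|y|≤r} |c(x+y)/c(x) − 1| = 0. -/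
open Filter

theorem radial_long_tailed_spatial (d : ℕ) (b : ℝ → ℝ) (ρ : ℝ) (hρ : 0 ≤ ρ)
    (hb_pos : ∀ s, 0 ≤ s → 0 < b s)
    (hb_anti : AntitoneOn b (Set.Ici ρ))
    (hb_lt : ∀ τ : ℝ, 0 ≤ τ →
      Tendsto (fun s => b (s + τ) / b s) atTop (nhds 1)) :
    ∀ r > (0 : ℝ), ∀ ε > (0 : ℝ), ∃ R : ℝ, ∀ x : EuclideanSpace ℝ (Fin d),
      R ≤ ‖x‖ → ∀ y : EuclideanSpace ℝ (Fin d), ‖y‖ ≤ r →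
        |b ‖x + y‖ / b ‖x‖ - 1| ≤ ε := by
  intro r hr ε hε
  have h1 := hb_lt r hr.le
  have h2 : Tendsto (fun s => (b (s + r) / b s)⁻¹) atTop (nhds 1) := by
    simpa using h1.inv₀ one_ne_zero
  obtain ⟨S₁, hS₁⟩ := (Metric.tendsto_atTop.mp h1) ε hε
  obtain ⟨S₂, hS₂⟩ := (Metric.tendsto_atTop.mp h2) ε hε
  refine ⟨max ρ (max S₁ S₂) + r, fun x hx y hy => ?_⟩
  set s := ‖x‖ with hs
  set u := ‖x + y‖ with hu
  have hsr : max ρ (max S₁ S₂) ≤ s - r := by linarith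
  have hsρ : ρ ≤ s - r := le_trans (le_max_left _ _) hsr
  have hS1s : S₁ ≤ s := by
    have := le_trans (le_max_left _ _) (le_max_right ρ (max S₁ S₂))
    linarith
  have hS2s : S₂ ≤ s - r := le_trans (le_trans (le_max_right _ _) (le_max_right _ _)) hsr
  have hu1 : s - r ≤ u := by
    have h : ‖x‖ ≤ ‖x + y‖ + ‖y‖ := by
      calc ‖x‖ = ‖(x + y) + (-y)‖ := by rw [add_neg_cancel_right]
      _ ≤ ‖x + y‖ + ‖-y‖ := norm_add_le _ _
      _ = ‖x + y‖ + ‖y‖ := by rw [norm_neg]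
    linarith
  have hu2 : u ≤ s + r := le_trans (norm_add_le x y) (by linarith)
  have hbs : 0 < b s := hb_pos s (by linarith)
  have hbsr : 0 < b (s - r) := hb_pos _ (by linarith)
  have hb1 : b (s + r) ≤ b u :=
    hb_anti (by simp only [Set.mem_Ici]; linarith) (by simp only [Set.mem_Ici]; linarith) hu2
  have hb2 : b u ≤ b (s - r) :=
    hb_anti (by simp only [Set.mem_Ici]; linarith) (by simp only [Set.mem_Ici]; linarith) hu1
  have hA := hS₁ s hS1s
  have hB := hS₂ (s - r) hS2s
  rw [Real.dist_eq] at hA hB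
  simp only [sub_add_cancel] at hB
  have hinv : (b s / b (s - r))⁻¹ = b (s - r) / b s := by
    rw [inv_div]
  rw [hinv] at hB
  have hA' : 1 - ε ≤ b (s + r) / b s := by
    have := abs_lt.mp hA
    linarith [this.1]
  have hB' : b (s - r) / b s ≤ 1 + ε := by
    have := abs_lt.mp hB
    linarith [this.2]
  have hlow : 1 - ε ≤ b u / b s := le_trans hA' (by gcongr)
  have hhigh : b u / b s ≤ 1 + ε := le_trans (by gcongr) hB'
  rw [abs_le]
  constructor <;> linarith
end

section
/- Let b : ℝ≥0 → (0,∞) be nonincreasing on [ρ,∞) for some ρ > 0, integrable against s^{d−1}, long-tailed, and set c(x) = ∫_{Δ(x)} b(|y|) dy where Δ(x) = {y ∈ ℝ^d : y_j ≥ x_j for all j}. Then for every h ∈ ℝ_+^d, c(x+h)/c(x) → 1 as max_j x_j → ∞. -/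
open MeasureTheory Filter

/-!
Translating by `h` turns `c(x + h)` into `∫_{Δ(x)} b(|y + h|) dy`. Every `y ∈ Δ(x)` has
`|y| ≥ max_j x_j` and `||y + h| - |y|| ≤ |h|`. For a long-tailed `b` that is eventually
nonincreasing, `b t / b s` lies within `ε` of `1` uniformly in `|t - s| ≤ |h|` once `s` is large,
because `b t` is squeezed between `b (s + |h|)` and `b (s - |h|)`. So the two integrands, and hence
the two integrals, have ratio within `ε` of `1`.
-/

lemma AntitoneOn.eventually_mem_Icc_mul_of_tendsto_div {b : ℝ → ℝ} {ρ τ ε : ℝ}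
    (hanti : AntitoneOn b (Set.Ici ρ)) (hpos : ∀ᶠ s in atTop, 0 < b s)
    (hτ : Tendsto (fun s => b (s + τ) / b s) atTop (nhds 1)) (hε : 0 < ε) :
    ∀ᶠ s in atTop, ∀ t, |t - s| ≤ τ → b t ∈ Set.Icc ((1 - ε) * b s) ((1 + ε) * b s) := by
  have hback : Tendsto (fun s => b (s - τ) / b s) atTop (nhds 1) := by
    simpa [sub_eq_add_neg] using
      (hτ.comp (tendsto_atTop_add_const_right _ (-τ) tendsto_id)).inv₀ one_ne_zero
  have hpos_back : ∀ᶠ s in atTop, 0 < b (s - τ) :=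
    tendsto_atTop_add_const_right _ (-τ) tendsto_id |>.eventually hpos
  filter_upwards [hτ.eventually (lt_mem_nhds (by linarith : 1 - ε < 1)),
    hback.eventually (gt_mem_nhds (by linarith : 1 < 1 + ε)), hpos, hpos_back,
    eventually_ge_atTop (ρ + τ)] with s hfwd hbwd hs hsτ hsρ t ht
  rw [abs_le] at ht
  rw [lt_div_iff₀ hs] at hfwd
  rw [div_lt_iff₀ hs] at hbwd
  have hle_fwd : b (s + τ) ≤ b t :=
    hanti (Set.mem_Ici.mpr (by linarith)) (Set.mem_Ici.mpr (by linarith)) (by linarith)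
  have hle_bwd : b t ≤ b (s - τ) :=
    hanti (Set.mem_Ici.mpr (by linarith)) (Set.mem_Ici.mpr (by linarith)) (by linarith)
  constructor <;> linarith

lemma abs_integral_div_integral_sub_one_le {α : Type*} [MeasurableSpace α] {μ : Measure α}
    {f g : α → ℝ} {ε : ℝ} (hf : Integrable f μ) (hg : Integrable g μ) (hf_pos : 0 < ∫ a, f a ∂μ)
    (hfg : ∀ᵐ a ∂μ, g a ∈ Set.Icc ((1 - ε) * f a) ((1 + ε) * f a)) :
    |(∫ a, g a ∂μ) / (∫ a, f a ∂μ) - 1| ≤ ε := by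
  have hlow : (1 - ε) * ∫ a, f a ∂μ ≤ ∫ a, g a ∂μ := by
    rw [← integral_const_mul]
    exact integral_mono_ae (hf.const_mul _) hg (hfg.mono fun _ h => h.1)
  have hup : ∫ a, g a ∂μ ≤ (1 + ε) * ∫ a, f a ∂μ := by
    rw [← integral_const_mul]
    exact integral_mono_ae hg (hf.const_mul _) (hfg.mono fun _ h => h.2)
  rw [abs_le, le_sub_iff_add_le, sub_le_iff_le_add, le_div_iff₀ hf_pos, div_le_iff₀ hf_pos]
  constructor <;> linarith

lemma setIntegral_pos_of_forall_pos {α : Type*} [MeasurableSpace α] {μ : Measure α} {s : Set α}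
    {f : α → ℝ} (hf : ∀ a, 0 < f a) (hfi : IntegrableOn f s μ) (hs : 0 < μ s) :
    0 < ∫ a in s, f a ∂μ := by
  rw [setIntegral_pos_iff_support_of_nonneg_ae (ae_of_all _ fun a => (hf a).le) hfi,
    Set.inter_eq_right.mpr fun a _ => Function.mem_support.mpr (hf a).ne']
  exact hs

section UpperOctant

variable {ι : Type*}

def upperOctant (x : EuclideanSpace ℝ ι) : Set (EuclideanSpace ℝ ι) := {y | ∀ j, x j ≤ y j}

lemma isClosed_upperOctant (x : EuclideanSpace ℝ ι) : IsClosed (upperOctant x) := by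
  simp only [upperOctant, Set.ofPred_forall]
  exact isClosed_iInter fun j => isClosed_le continuous_const (EuclideanSpace.proj j).continuous

lemma measurableSet_upperOctant [Fintype ι] (x : EuclideanSpace ℝ ι) :
    MeasurableSet (upperOctant x) :=
  (isClosed_upperOctant x).measurableSet

lemma preimage_add_right_upperOctant (x h : EuclideanSpace ℝ ι) :
    (· + h) ⁻¹' upperOctant (x + h) = upperOctant x := by
  ext y
  simp [upperOctant]

lemma volume_upperOctant_pos [Fintype ι] (x : EuclideanSpace ℝ ι) :
    0 < volume (upperOctant x) := by
  have hopen : IsOpen {y : EuclideanSpace ℝ ι | ∀ j, x j < y j} := by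
    simp only [Set.ofPred_forall]
    exact isOpen_iInter_of_finite fun j =>
      isOpen_lt continuous_const (EuclideanSpace.proj j).continuous
  have hne : {y : EuclideanSpace ℝ ι | ∀ j, x j < y j}.Nonempty :=
    ⟨WithLp.toLp 2 fun j => x j + 1, fun j => by simp⟩
  exact (hopen.measure_pos volume hne).trans_le (measure_mono fun y hy j => (hy j).le)

lemma le_norm_of_mem_upperOctant [Fintype ι] {x y : EuclideanSpace ℝ ι} {R : ℝ} {j : ι}
    (hj : R ≤ x j) (hy : y ∈ upperOctant x) : R ≤ ‖y‖ :=
  calc R ≤ y j := hj.trans (hy j)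
    _ ≤ ‖y j‖ := Real.le_norm_self _
    _ ≤ ‖y‖ := PiLp.norm_apply_le y j

lemma setIntegral_upperOctant_add [Fintype ι] (f : EuclideanSpace ℝ ι → ℝ)
    (x h : EuclideanSpace ℝ ι) :
    ∫ y in upperOctant (x + h), f y = ∫ y in upperOctant x, f (y + h) := by
  rw [← preimage_add_right_upperOctant x h]
  exact ((measurePreserving_add_right volume h).setIntegral_preimage_emb
    (MeasurableEquiv.addRight h).measurableEmbedding f _).symm

end UpperOctant

theorem octant_integral_long_tailed_general (d : ℕ) (b : ℝ → ℝ) (ρ : ℝ)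
    (hb_pos : ∀ s, 0 ≤ s → 0 < b s)
    (hb_anti : AntitoneOn b (Set.Ici ρ))
    (hb_int : Integrable (fun y : EuclideanSpace ℝ (Fin d) => b ‖y‖))
    (hb_lt : ∀ τ : ℝ, 0 ≤ τ →
      Tendsto (fun s => b (s + τ) / b s) atTop (nhds 1)) :
    ∀ h : EuclideanSpace ℝ (Fin d), (∀ j, 0 ≤ h j) →
      ∀ ε > (0 : ℝ), ∃ R : ℝ, ∀ x : EuclideanSpace ℝ (Fin d), (∃ j, R ≤ x j) →
        |(∫ y in {y : EuclideanSpace ℝ (Fin d) | ∀ j, (x + h) j ≤ y j}, b ‖y‖) /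
          (∫ y in {y : EuclideanSpace ℝ (Fin d) | ∀ j, x j ≤ y j}, b ‖y‖) - 1| ≤ ε := by
  intro h _ ε hε
  obtain ⟨R, hR⟩ := eventually_atTop.mp <| hb_anti.eventually_mem_Icc_mul_of_tendsto_div
    ((eventually_ge_atTop 0).mono hb_pos) (hb_lt ‖h‖ (norm_nonneg h)) hε
  refine ⟨R, fun x ⟨j, hj⟩ => ?_⟩
  change |(∫ y in upperOctant (x + h), b ‖y‖) / (∫ y in upperOctant x, b ‖y‖) - 1| ≤ ε
  rw [setIntegral_upperOctant_add]
  refine abs_integral_div_integral_sub_one_le hb_int.integrableOn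
    (hb_int.comp_add_right h).integrableOn ?_ ?_
  · exact setIntegral_pos_of_forall_pos (fun y => hb_pos _ (norm_nonneg y)) hb_int.integrableOn
      (volume_upperOctant_pos x)
  · refine ae_restrict_of_forall_mem (measurableSet_upperOctant x) fun y hy => ?_
    refine hR ‖y‖ (le_norm_of_mem_upperOctant hj hy) ‖y + h‖ ?_
    simpa using abs_norm_sub_norm_le (y + h) y

theorem octant_integral_long_tailed (d : ℕ) (hd : 0 < d) (b : ℝ → ℝ) (ρ : ℝ) (hρ : 0 < ρ)
    (hb_pos : ∀ s, 0 ≤ s → 0 < b s)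
    (hb_anti : AntitoneOn b (Set.Ici ρ))
    (hb_int : Integrable (fun y : EuclideanSpace ℝ (Fin d) => b ‖y‖))
    (hb_lt : ∀ τ : ℝ, 0 ≤ τ →
      Tendsto (fun s => b (s + τ) / b s) atTop (nhds 1)) :
    ∀ h : EuclideanSpace ℝ (Fin d), (∀ j, 0 ≤ h j) →
      ∀ ε > (0 : ℝ), ∃ R : ℝ, ∀ x : EuclideanSpace ℝ (Fin d), (∃ j, R ≤ x j) →
        |(∫ y in {y : EuclideanSpace ℝ (Fin d) | ∀ j, (x + h) j ≤ y j}, b ‖y‖) /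
          (∫ y in {y : EuclideanSpace ℝ (Fin d) | ∀ j, x j ≤ y j}, b ‖y‖) - 1| ≤ ε :=
  octant_integral_long_tailed_general d b ρ hb_pos hb_anti hb_int hb_lt
end

section
/- Let b : ℝ≥0 → (0,∞) be strictly decreasing to 0 on ℝ≥0 with c(x) := ∫_{Δ(x)} b(|y|) dy finite for all x, where Δ(x) = {y : y_j ≥ x_j ∀j}. Suppose b is long-tailed. Then there exists λ₁ > 0 such that for all λ ∈ (0, λ₁), every x with c(x) < λ satisfies: for all y ∈ Δ(x), b(|y|) < λ. In other words, the sublevel set {c < λ} is contained in Θ_λ(p), where p(x) = b(|x|) and Θ_λ(p) = {x : Δ(x) ⊂ {p < λ}}. -/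
/-!
For `y ∈ Δ(x)` the cube `y + [0, 2]ᵈ` lies in `Δ(x)`, has volume `2ᵈ > 1`, and its points have
norm at most `‖y‖ + 2√d`; hence `c(x) ≥ 2ᵈ b(‖y‖ + 2√d)`. Since `b` is long-tailed,
`b s < 2ᵈ b(s + 2√d)` for all `s ≥ S`, which bounds `b ‖y‖` by `c(x)` when `‖y‖ ≥ S`; when
`‖y‖ < S`, monotonicity gives `c(x) ≥ λ₁ := 2ᵈ b(S + 2√d)`.
-/

open MeasureTheory Filter Set Topology

namespace EuclideanSpace

variable {ι : Type*}

def upperOrthant (x : EuclideanSpace ℝ ι) : Set (EuclideanSpace ℝ ι) := {y | ∀ j, x j ≤ y j}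

def cube (y : EuclideanSpace ℝ ι) (a : ℝ) : Set (EuclideanSpace ℝ ι) :=
  {z | ∀ j, z j ∈ Icc (y j) (y j + a)}

lemma cube_subset_upperOrthant {x y : EuclideanSpace ℝ ι} (hy : y ∈ upperOrthant x) (a : ℝ) :
    cube y a ⊆ upperOrthant x :=
  fun _ hz j => (hy j).trans (hz j).1

lemma cube_eq_preimage_Icc (y : EuclideanSpace ℝ ι) (a : ℝ) :
    cube y a = WithLp.ofLp ⁻¹' Icc (WithLp.ofLp y) (WithLp.ofLp y + fun _ => a) := by
  ext z; simp [cube, Pi.le_def, forall_and]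

variable [Fintype ι]

lemma measurableSet_cube (y : EuclideanSpace ℝ ι) (a : ℝ) : MeasurableSet (cube y a) := by
  rw [cube_eq_preimage_Icc]
  exact measurableSet_Icc.preimage (WithLp.measurable_ofLp 2 _)

lemma volume_cube (y : EuclideanSpace ℝ ι) (a : ℝ) :
    volume (cube y a) = ENNReal.ofReal a ^ Fintype.card ι := by
  rw [cube_eq_preimage_Icc,
    (PiLp.volume_preserving_ofLp ι).measure_preimage measurableSet_Icc.nullMeasurableSet,
    Real.volume_Icc_pi]
  simp

lemma norm_le_sqrt_card_mul {v : EuclideanSpace ℝ ι} {a : ℝ} (ha : 0 ≤ a)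
    (hv : ∀ j, |v j| ≤ a) : ‖v‖ ≤ √(Fintype.card ι) * a := by
  rw [EuclideanSpace.norm_eq, ← Real.sqrt_sq ha, ← Real.sqrt_mul (Nat.cast_nonneg _)]
  gcongr
  calc ∑ j, ‖v j‖ ^ 2 ≤ ∑ _j : ι, a ^ 2 := by
        gcongr with j
        exact (Real.norm_eq_abs _).trans_le (hv j)
    _ = _ := by simp

lemma norm_le_of_mem_cube {y z : EuclideanSpace ℝ ι} {a : ℝ} (ha : 0 ≤ a) (hz : z ∈ cube y a) :
    ‖z‖ ≤ ‖y‖ + √(Fintype.card ι) * a := by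
  have hzy : ‖z - y‖ ≤ √(Fintype.card ι) * a := by
    refine norm_le_sqrt_card_mul ha fun j => abs_le.mpr ⟨?_, ?_⟩ <;>
      simp only [PiLp.sub_apply] <;> linarith [(hz j).1, (hz j).2]
  linarith [norm_le_norm_add_norm_sub' z y]

lemma mul_le_setIntegral_upperOrthant {b : ℝ → ℝ} (hb_nonneg : ∀ s, 0 ≤ s → 0 ≤ b s)
    (hb : AntitoneOn b (Ici 0)) (hb_int : Integrable fun z : EuclideanSpace ℝ ι => b ‖z‖)
    {x y : EuclideanSpace ℝ ι} (hy : y ∈ upperOrthant x) {a : ℝ} (ha : 0 ≤ a) :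
    a ^ Fintype.card ι * b (‖y‖ + √(Fintype.card ι) * a) ≤
      ∫ z in upperOrthant x, b ‖z‖ := by
  calc a ^ Fintype.card ι * b (‖y‖ + √(Fintype.card ι) * a)
      = ∫ _ in cube y a, b (‖y‖ + √(Fintype.card ι) * a) := by
        rw [setIntegral_const, measureReal_def, volume_cube, ENNReal.toReal_pow,
          ENNReal.toReal_ofReal ha, smul_eq_mul]
    _ ≤ ∫ z in cube y a, b ‖z‖ := by
        refine setIntegral_mono_on (integrableOn_const ?_) hb_int.integrableOn ?_
          fun z hz => hb (norm_nonneg z) (mem_Ici.2 (by positivity)) (norm_le_of_mem_cube ha hz)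
        · rw [volume_cube]; exact ENNReal.pow_ne_top ENNReal.ofReal_ne_top
        · exact measurableSet_cube y a
    _ ≤ ∫ z in upperOrthant x, b ‖z‖ :=
        setIntegral_mono_set hb_int.integrableOn (.of_forall fun z => hb_nonneg _ (norm_nonneg z))
          (cube_subset_upperOrthant hy a).eventuallyLE

end EuclideanSpace

lemma eventually_lt_mul_shift {b : ℝ → ℝ} (hb_pos : ∀ᶠ s in atTop, 0 < b s) {τ V : ℝ} (hV : 1 < V)
    (h : Tendsto (fun s => b (s + τ) / b s) atTop (𝓝 1)) :
    ∀ᶠ s in atTop, b s < V * b (s + τ) := by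
  have hV₀ : 0 < V := one_pos.trans hV
  filter_upwards [hb_pos, h.eventually (lt_mem_nhds (inv_lt_one_of_one_lt₀ hV))]
    with s hs hratio
  calc b s = V * (V⁻¹ * b s) := by field_simp
    _ < V * (b (s + τ) / b s * b s) := by gcongr
    _ = V * b (s + τ) := by field_simp

lemma exists_min_le_mul_shift {b : ℝ → ℝ} (hb_pos : ∀ s, 0 ≤ s → 0 < b s)
    (hb : AntitoneOn b (Ici 0)) {τ V : ℝ} (hτ : 0 ≤ τ) (hV : 0 < V)
    (h : ∀ᶠ s in atTop, b s < V * b (s + τ)) :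
    ∃ L > 0, ∀ s, 0 ≤ s → min (b s) L ≤ V * b (s + τ) := by
  obtain ⟨S, hS⟩ := eventually_atTop.1 (h.and (eventually_ge_atTop 0))
  have hS₀ : 0 ≤ S := (hS S le_rfl).2
  refine ⟨V * b (S + τ), mul_pos hV (hb_pos _ (by positivity)), fun s hs => ?_⟩
  rcases le_total S s with hSs | hsS
  · exact (min_le_left _ _).trans (hS s hSs).1.le
  · have hmono : b (S + τ) ≤ b (s + τ) :=
      hb (mem_Ici.2 (by positivity)) (mem_Ici.2 (by positivity)) (by linarith)
    exact (min_le_right _ _).trans (mul_le_mul_of_nonneg_left hmono hV.le)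

open EuclideanSpace in
theorem sublevel_subset_Theta_general (d : ℕ) (hd : 0 < d) (b : ℝ → ℝ)
    (hb_pos : ∀ s, 0 ≤ s → 0 < b s)
    (hb_anti : StrictAntiOn b (Set.Ici 0))
    (hb_int : Integrable (fun y : EuclideanSpace ℝ (Fin d) => b ‖y‖))
    (hb_lt : ∀ τ : ℝ, 0 ≤ τ →
      Tendsto (fun s => b (s + τ) / b s) atTop (nhds 1)) :
    ∃ lam₁ > (0 : ℝ), ∀ lam ∈ Set.Ioo (0 : ℝ) lam₁,
      ∀ x : EuclideanSpace ℝ (Fin d),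
        (∫ y in {y : EuclideanSpace ℝ (Fin d) | ∀ j, x j ≤ y j}, b ‖y‖) < lam →
        ∀ y : EuclideanSpace ℝ (Fin d), (∀ j, x j ≤ y j) → b ‖y‖ < lam := by
  have hV : (1 : ℝ) < 2 ^ d := one_lt_pow₀ one_lt_two hd.ne'
  have hshift := eventually_lt_mul_shift ((eventually_ge_atTop 0).mono hb_pos) hV
    (hb_lt (√d * 2) (by positivity))
  obtain ⟨lam₁, hlam₁, hmin⟩ := exists_min_le_mul_shift hb_pos hb_anti.antitoneOn
    (by positivity) (one_pos.trans hV) hshift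
  refine ⟨lam₁, hlam₁, fun lam ⟨_, hlam⟩ x hx y hy => ?_⟩
  by_contra! hby
  have hcube := mul_le_setIntegral_upperOrthant (fun s hs => (hb_pos s hs).le)
    hb_anti.antitoneOn hb_int hy zero_le_two
  rw [Fintype.card_fin] at hcube
  have : lam < lam := calc
    lam ≤ min (b ‖y‖) lam₁ := le_min hby hlam.le
    _ ≤ 2 ^ d * b (‖y‖ + √d * 2) := hmin ‖y‖ (norm_nonneg y)
    _ ≤ ∫ z in upperOrthant x, b ‖z‖ := hcube
    _ < lam := hx
  exact lt_irrefl lam this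

theorem sublevel_subset_Theta (d : ℕ) (hd : 0 < d) (b : ℝ → ℝ)
    (hb_pos : ∀ s, 0 ≤ s → 0 < b s)
    (hb_anti : StrictAntiOn b (Set.Ici 0))
    (hb_lim : Tendsto b atTop (nhds 0))
    (hb_int : Integrable (fun y : EuclideanSpace ℝ (Fin d) => b ‖y‖))
    (hb_lt : ∀ τ : ℝ, 0 ≤ τ →
      Tendsto (fun s => b (s + τ) / b s) atTop (nhds 1)) :
    ∃ lam₁ > (0 : ℝ), ∀ lam ∈ Set.Ioo (0 : ℝ) lam₁,
      ∀ x : EuclideanSpace ℝ (Fin d),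
        (∫ y in {y : EuclideanSpace ℝ (Fin d) | ∀ j, x j ≤ y j}, b ‖y‖) < lam →
        ∀ y : EuclideanSpace ℝ (Fin d), (∀ j, x j ≤ y j) → b ‖y‖ < lam :=
  sublevel_subset_Theta_general d hd b hb_pos hb_anti hb_int hb_lt
end

section
/- Let a ∈ L¹(ℝ^d) be a nonnegative probability density and b : ℝ≥0 → (0,∞) with p(x) = b(|x|) integrable. Suppose that for some λ₀ > 0 and δ > 0 one has (a∗p)(x)/p(x) ≤ 1 + δ for all x with p(x) < λ. Define c(x) = ∫_{Δ(x)} p(z) dz where Δ(x) = {y : y_j ≥ x_j ∀j}. Then for every x ∈ Θ_λ(p) := {x : Δ(x) ⊂ {p < λ}}, one has (a∗c)(x)/c(x) ≤ 1 + δ. -/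
/-!
Write `Δ(y) = y + Q` with `Q` the nonnegative orthant. By translation invariance
`c(y) = ∫_Q p(y + w) dw`, and Fubini turns `(a ∗ c)(x)` into `∫_Q (a ∗ p)(x + w) dw`.
Every `x + w` with `w ∈ Q` lies in `Δ(x) ⊆ {p < λ}`, so the hypothesis bounds the integrand by
`(1 + δ) p(x + w)`, whose integral over `Q` is `(1 + δ) c(x)`.
-/

open MeasureTheory

section Translation

variable {G 𝕜 : Type*} [AddGroup G] [MeasurableSpace G] [RCLike 𝕜] {μ : Measure G}

theorem integrable_mul_comp_add [MeasurableAdd₂ G] [SFinite μ] [μ.IsAddLeftInvariant]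
    {f g : G → 𝕜} (hf : Integrable f μ) (hg : Integrable g μ) :
    Integrable (fun q : G × G => f q.1 * g (q.1 + q.2)) (μ.prod μ) :=
  ((measurePreserving_prod_add μ μ).integrable_comp
    (hf.mul_prod hg).aestronglyMeasurable).mpr (hf.mul_prod hg)

theorem integral_mul_setIntegral_comp_add [MeasurableAdd₂ G] [SFinite μ]
    [μ.IsAddLeftInvariant] {f g : G → 𝕜} (hf : Integrable f μ) (hg : Integrable g μ)
    (s : Set G) :
    ∫ y, f y * ∫ w in s, g (y + w) ∂μ ∂μ = ∫ w in s, ∫ y, f y * g (y + w) ∂μ ∂μ := by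
  have hfg : Integrable (fun q : G × G => f q.1 * g (q.1 + q.2)) (μ.prod (μ.restrict s)) :=
    (integrable_mul_comp_add hf hg).mono_measure (Measure.prod_mono le_rfl Measure.restrict_le_self)
  simp_rw [← integral_const_mul]
  exact integral_integral_swap hfg

theorem integral_comp_sub_mul_comp_add [MeasurableAdd G] [μ.IsAddRightInvariant]
    (f g : G → 𝕜) (x w : G) :
    ∫ y, f (x - y) * g (y + w) ∂μ = ∫ y, f (x + w - y) * g y ∂μ := by
  rw [← integral_add_right_eq_self (fun y => f (x + w - y) * g y) w]
  simp only [add_sub_add_right_eq_sub]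

end Translation

section Orthant

variable {d : ℕ} {E : Type*} [NormedAddCommGroup E] [NormedSpace ℝ E]

theorem measurableSet_nonneg_orthant :
    MeasurableSet {w : EuclideanSpace ℝ (Fin d) | ∀ j, 0 ≤ w j} := by
  simp only [Set.ofPred_forall]
  exact (isClosed_iInter fun j => isClosed_le continuous_const (by fun_prop)).measurableSet

theorem setIntegral_orthant_eq_setIntegral_nonneg_orthant (p : EuclideanSpace ℝ (Fin d) → E)
    (y : EuclideanSpace ℝ (Fin d)) :
    ∫ z in {z : EuclideanSpace ℝ (Fin d) | ∀ j, y j ≤ z j}, p z =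
      ∫ w in {w : EuclideanSpace ℝ (Fin d) | ∀ j, 0 ≤ w j}, p (y + w) := by
  have hpre : (y + ·) ⁻¹' {z : EuclideanSpace ℝ (Fin d) | ∀ j, y j ≤ z j} =
      {w | ∀ j, 0 ≤ w j} := by
    ext w; simp
  rw [← hpre, (measurePreserving_add_left volume y).setIntegral_preimage_emb
    (measurableEmbedding_addLeft y)]

end Orthant

theorem conv_estimate_transfers_to_octant_integral_general (d : ℕ)
    (a : EuclideanSpace ℝ (Fin d) → ℝ) (b : ℝ → ℝ) (lam δ : ℝ)
    (ha_int : Integrable a)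
    (hp_int : Integrable (fun y : EuclideanSpace ℝ (Fin d) => b ‖y‖))
    (hap : ∀ x : EuclideanSpace ℝ (Fin d), b ‖x‖ < lam →
      (∫ y, a (x - y) * b ‖y‖) ≤ (1 + δ) * b ‖x‖) :
    ∀ x : EuclideanSpace ℝ (Fin d), (∀ y : EuclideanSpace ℝ (Fin d),
        (∀ j, x j ≤ y j) → b ‖y‖ < lam) →
      (∫ y, a (x - y) * ∫ z in {z : EuclideanSpace ℝ (Fin d) | ∀ j, y j ≤ z j}, b ‖z‖) ≤
        (1 + δ) * ∫ z in {z : EuclideanSpace ℝ (Fin d) | ∀ j, x j ≤ z j}, b ‖z‖ := by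
  intro x hx
  have hax : Integrable (fun y => a (x - y)) := ha_int.comp_sub_left x
  have hbound : ∀ w ∈ {w : EuclideanSpace ℝ (Fin d) | ∀ j, 0 ≤ w j},
      ∫ y, a (x - y) * b ‖y + w‖ ≤ (1 + δ) * b ‖x + w‖ := fun w hw => by
    rw [integral_comp_sub_mul_comp_add (fun y => a y) (fun y => b ‖y‖)]
    exact hap _ (hx _ fun j => by simpa using hw j)
  simp_rw [setIntegral_orthant_eq_setIntegral_nonneg_orthant]
  calc ∫ y, a (x - y) * ∫ w in {w : EuclideanSpace ℝ (Fin d) | ∀ j, 0 ≤ w j}, b ‖y + w‖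
      = ∫ w in {w : EuclideanSpace ℝ (Fin d) | ∀ j, 0 ≤ w j}, ∫ y, a (x - y) * b ‖y + w‖ :=
        integral_mul_setIntegral_comp_add hax hp_int _
    _ ≤ ∫ w in {w : EuclideanSpace ℝ (Fin d) | ∀ j, 0 ≤ w j}, (1 + δ) * b ‖x + w‖ :=
        setIntegral_mono_on (integrable_mul_comp_add hax hp_int).integral_prod_right.integrableOn
          ((hp_int.comp_add_left x).const_mul _).integrableOn measurableSet_nonneg_orthant hbound
    _ = (1 + δ) * ∫ w in {w : EuclideanSpace ℝ (Fin d) | ∀ j, 0 ≤ w j}, b ‖x + w‖ :=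
        integral_const_mul _ _

theorem conv_estimate_transfers_to_octant_integral (d : ℕ)
    (a : EuclideanSpace ℝ (Fin d) → ℝ) (b : ℝ → ℝ) (lam δ : ℝ)
    (hlam : 0 < lam) (hδ : 0 < δ)
    (ha_nonneg : ∀ x, 0 ≤ a x) (ha_int : Integrable a)
    (ha_prob : ∫ x, a x = 1)
    (hp_int : Integrable (fun y : EuclideanSpace ℝ (Fin d) => b ‖y‖))
    (hap : ∀ x : EuclideanSpace ℝ (Fin d), b ‖x‖ < lam →
      (∫ y, a (x - y) * b ‖y‖) ≤ (1 + δ) * b ‖x‖) :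
    ∀ x : EuclideanSpace ℝ (Fin d), (∀ y : EuclideanSpace ℝ (Fin d),
        (∀ j, x j ≤ y j) → b ‖y‖ < lam) →
      (∫ y, a (x - y) * ∫ z in {z : EuclideanSpace ℝ (Fin d) | ∀ j, y j ≤ z j}, b ‖z‖) ≤
        (1 + δ) * ∫ z in {z : EuclideanSpace ℝ (Fin d) | ∀ j, x j ≤ z j}, b ‖z‖ :=
  conv_estimate_transfers_to_octant_integral_general d a b lam δ ha_int hp_int hap
end

section
/- Let λ > 1 and b(s) = exp(−s/(log s)^λ) for s large. Let β > 0 and define η(t) := b^{−1}(e^{−βt}) for large t. Then η(t) ∼ β t (log t)^λ as t → ∞, i.e. η(t)/(β t (log t)^λ) → 1. -/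
/-!
Taking logarithms in `η = β t (log η)^λ` gives `log η = log β + log t + λ log log η`, and
`log log η = o(log η)`, so `log η ∼ log t`. Substituting back,
`η / (β t (log t)^λ) = (log η / log t)^λ → 1`.
-/

open Filter Real Topology

lemma eq_mul_log_rpow_of_exp_neg_div_eq {x c p : ℝ} (hx : 0 < log x)
    (h : exp (-x / log x ^ p) = exp (-c)) : x = c * log x ^ p := by
  have hpow : log x ^ p ≠ 0 := (rpow_pos_of_pos hx p).ne'
  have := exp_injective h
  field_simp at this
  linarith

section EqMulLogRpow

variable {f : ℝ → ℝ} {c p : ℝ}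

lemma log_div_log_eq_of_eq_mul_log_rpow {t : ℝ} (hc : 0 < c) (ht : 0 < t) (hf : 0 < log (f t))
    (h : f t = c * t * log (f t) ^ p) :
    log t / log (f t) = 1 - log c / log (f t) - p * (log (log (f t)) / log (f t)) := by
  have hlog : log (f t) = log c + log t + p * log (log (f t)) := by
    nth_rewrite 1 [h]
    rw [log_mul (mul_pos hc ht).ne' (rpow_pos_of_pos hf p).ne', log_mul hc.ne' ht.ne',
      log_rpow hf]
  field_simp
  linarith

lemma tendsto_log_div_log_of_eq_mul_log_rpow (hc : 0 < c) (hf : Tendsto f atTop atTop)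
    (h : ∀ᶠ t in atTop, f t = c * t * log (f t) ^ p) :
    Tendsto (fun t => log (f t) / log t) atTop (𝓝 1) := by
  have hlogf : Tendsto (fun t => log (f t)) atTop atTop := tendsto_log_atTop.comp hf
  have hloglog : Tendsto (fun t => log (log (f t)) / log (f t)) atTop (𝓝 0) :=
    isLittleO_log_id_atTop.tendsto_div_nhds_zero.comp hlogf
  have hconst : Tendsto (fun t => log c / log (f t)) atTop (𝓝 0) :=
    tendsto_const_nhds.div_atTop hlogf
  have hlim : Tendsto (fun t => 1 - log c / log (f t) - p * (log (log (f t)) / log (f t)))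
      atTop (𝓝 1) := by
    simpa using (tendsto_const_nhds (x := (1 : ℝ))).sub hconst |>.sub (hloglog.const_mul p)
  have hinv : Tendsto (fun t => log t / log (f t)) atTop (𝓝 1) := by
    refine hlim.congr' ?_
    filter_upwards [h, hlogf.eventually_gt_atTop 0, eventually_gt_atTop 0] with t ht hft htpos
    exact (log_div_log_eq_of_eq_mul_log_rpow hc htpos hft ht).symm
  simpa using hinv.inv₀ one_ne_zero

lemma tendsto_div_mul_log_rpow_of_eq_mul_log_rpow (hc : 0 < c) (hf : Tendsto f atTop atTop)
    (h : ∀ᶠ t in atTop, f t = c * t * log (f t) ^ p) :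
    Tendsto (fun t => f t / (c * t * log t ^ p)) atTop (𝓝 1) := by
  have hratio := (tendsto_log_div_log_of_eq_mul_log_rpow hc hf h).rpow_const
    (p := p) (Or.inl one_ne_zero)
  rw [one_rpow] at hratio
  refine hratio.congr' ?_
  have hlogf : Tendsto (fun t => log (f t)) atTop atTop := tendsto_log_atTop.comp hf
  filter_upwards [h, hlogf.eventually_gt_atTop 0, eventually_gt_atTop 1] with t ht hft ht1
  have hlogt := log_pos ht1
  have : log t ^ p ≠ 0 := (rpow_pos_of_pos hlogt p).ne'
  rw [div_rpow hft.le hlogt.le]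
  nth_rewrite 2 [ht]
  field_simp

end EqMulLogRpow

theorem eta_asymptotics_almost_linear_general (lam β : ℝ) (hβ : 0 < β)
    (η : ℝ → ℝ)
    (hη_top : Tendsto η atTop atTop)
    (hη : ∀ᶠ t in atTop,
      Real.exp (-(η t) / (Real.log (η t)) ^ lam) = Real.exp (-β * t)) :
    Tendsto (fun t => η t / (β * t * (Real.log t) ^ lam)) atTop (nhds 1) := by
  refine tendsto_div_mul_log_rpow_of_eq_mul_log_rpow hβ hη_top ?_
  filter_upwards [hη, (tendsto_log_atTop.comp hη_top).eventually_gt_atTop 0] with t ht hlog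
  rw [neg_mul] at ht
  exact eq_mul_log_rpow_of_exp_neg_div_eq hlog ht

theorem eta_asymptotics_almost_linear (lam β : ℝ) (hlam : 1 < lam) (hβ : 0 < β)
    (η : ℝ → ℝ)
    (hη_top : Tendsto η atTop atTop)
    (hη : ∀ᶠ t in atTop,
      Real.exp (-(η t) / (Real.log (η t)) ^ lam) = Real.exp (-β * t)) :
    Tendsto (fun t => η t / (β * t * (Real.log t) ^ lam)) atTop (nhds 1) :=
  eta_asymptotics_almost_linear_general lam β hβ η hη_top hη
end

section
/- Let b : ℝ≥0 → ℝ≥0 be nonincreasing for large arguments with ∫_0^∞ b(r) r dr < ∞, β > 0, and suppose X(t) → ∞ satisfies ∫_{X(t)}^∞ ∫_{X(t)}^∞ b(√(y₁²+y₂²)) dy₁ dy₂ = e^{−βt} for large t. Define c(x) = (π/2) ∫_{√2 x}^∞ b(r) r dr and μ(t) = c^{−1}(e^{−βt}). Then for every ε ∈ (0,1) and all sufficiently large t: μ(t) ≥ X(t) ≥ (1/2) μ(t − εt). -/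
open MeasureTheory Filter Real Set

/-! In polar coordinates, the integral of `b(|y|)` over the sector `r > a, θ₁ < θ < θ₂` is
`(θ₂ - θ₁) ∫_a^∞ b(r) r dr`. The quadrant `(x, ∞)²` lies in the sector `r > √2 x, 0 < θ < π/2`
and contains the sector `r > 2x, π/6 < θ < π/3`, so
`(π/6) ∫_{2x}^∞ b(r) r dr ≤ e^{-βt} ≤ c(x)` for `x = X(t)`. The right inequality and the
monotonicity of `c` give `X(t) ≤ μ(t)`. If `2 X(t) < μ((1-ε)t)`, the left one gives
`e^{-β(1-ε)t} = c(μ((1-ε)t)) ≤ 3 e^{-βt}`, which fails for large `t`. -/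

def polarSector (a θ₁ θ₂ : ℝ) : Set (ℝ × ℝ) := polarCoord.symm '' (Ioi a ×ˢ Ioo θ₁ θ₂)

section ChangeOfVariables

variable {E : Type*} [NormedAddCommGroup E] [NormedSpace ℝ E] {s : Set (ℝ × ℝ)}

theorem integrableOn_image_polarCoord_symm_iff (hs : MeasurableSet s)
    (hst : s ⊆ polarCoord.target) (f : ℝ × ℝ → E) :
    IntegrableOn f (polarCoord.symm '' s) ↔
      IntegrableOn (fun p => p.1 • f (polarCoord.symm p)) s := by
  rw [integrableOn_image_iff_integrableOn_abs_det_fderiv_smul volume hs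
    (fun p _ => (hasFDerivAt_polarCoord_symm p).hasFDerivWithinAt) (polarCoord.symm.injOn.mono hst)]
  refine integrableOn_congr_fun (fun p hp => ?_) hs
  rw [det_fderivPolarCoordSymm, abs_of_pos (hst hp).1]

theorem setIntegral_image_polarCoord_symm (hs : MeasurableSet s)
    (hst : s ⊆ polarCoord.target) (f : ℝ × ℝ → E) :
    ∫ y in polarCoord.symm '' s, f y = ∫ p in s, p.1 • f (polarCoord.symm p) := by
  rw [integral_image_eq_integral_abs_det_fderiv_smul volume hs
    (fun p _ => (hasFDerivAt_polarCoord_symm p).hasFDerivWithinAt) (polarCoord.symm.injOn.mono hst)]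
  refine setIntegral_congr_fun hs fun p hp => ?_
  rw [det_fderivPolarCoordSymm, abs_of_pos (hst hp).1]

end ChangeOfVariables

theorem sqrt_sq_add_sq_polarCoord_symm {p : ℝ × ℝ} (hp : 0 ≤ p.1) :
    √((polarCoord.symm p).1 ^ 2 + (polarCoord.symm p).2 ^ 2) = p.1 := by
  rw [polarCoord_symm_apply, mul_pow, mul_pow, ← mul_add, cos_sq_add_sin_sq, mul_one,
    sqrt_sq hp]

section Sector

variable {g : ℝ → ℝ} {a θ₁ θ₂ : ℝ}

theorem Ioi_prod_Ioo_subset_polarCoord_target (ha : 0 ≤ a) (hθ₁ : -π ≤ θ₁) (hθ₂ : θ₂ ≤ π) :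
    Ioi a ×ˢ Ioo θ₁ θ₂ ⊆ polarCoord.target := by
  rw [polarCoord_target]
  exact prod_mono (Ioi_subset_Ioi ha) (Ioo_subset_Ioo hθ₁ hθ₂)

theorem integrableOn_radial_polarSector (ha : 0 ≤ a) (hθ₁ : -π ≤ θ₁) (hθ₂ : θ₂ ≤ π)
    (hg : IntegrableOn (fun r => g r * r) (Ioi a)) :
    IntegrableOn (fun y : ℝ × ℝ => g √(y.1 ^ 2 + y.2 ^ 2)) (polarSector a θ₁ θ₂) := by
  have hs : MeasurableSet (Ioi a ×ˢ Ioo θ₁ θ₂) := measurableSet_Ioi.prod measurableSet_Ioo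
  rw [polarSector, integrableOn_image_polarCoord_symm_iff hs
    (Ioi_prod_Ioo_subset_polarCoord_target ha hθ₁ hθ₂)]
  have : IsFiniteMeasure (volume.restrict (Ioo θ₁ θ₂)) :=
    isFiniteMeasure_restrict.2 measure_Ioo_lt_top.ne
  have hprod : IntegrableOn (fun p : ℝ × ℝ => g p.1 * p.1) (Ioi a ×ˢ Ioo θ₁ θ₂) := by
    rw [IntegrableOn, Measure.volume_eq_prod, ← Measure.prod_restrict]
    simpa using hg.mul_prod (integrable_const (1 : ℝ))
  refine hprod.congr_fun (fun p hp => ?_) hs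
  rw [sqrt_sq_add_sq_polarCoord_symm (ha.trans hp.1.le), smul_eq_mul, mul_comm]

theorem setIntegral_radial_polarSector (ha : 0 ≤ a) (hθ₁ : -π ≤ θ₁) (hθ₂ : θ₂ ≤ π) (hθ : θ₁ ≤ θ₂) :
    ∫ y in polarSector a θ₁ θ₂, g √(y.1 ^ 2 + y.2 ^ 2) = (θ₂ - θ₁) * ∫ r in Ioi a, g r * r := by
  have hs : MeasurableSet (Ioi a ×ˢ Ioo θ₁ θ₂) := measurableSet_Ioi.prod measurableSet_Ioo
  rw [polarSector, setIntegral_image_polarCoord_symm hs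
    (Ioi_prod_Ioo_subset_polarCoord_target ha hθ₁ hθ₂)]
  calc ∫ p in Ioi a ×ˢ Ioo θ₁ θ₂, p.1 • g √((polarCoord.symm p).1 ^ 2 + (polarCoord.symm p).2 ^ 2)
      = ∫ p in Ioi a ×ˢ Ioo θ₁ θ₂, g p.1 * p.1 * 1 := by
        refine setIntegral_congr_fun hs fun p hp => ?_
        rw [sqrt_sq_add_sq_polarCoord_symm (ha.trans hp.1.le), smul_eq_mul, mul_one, mul_comm]
    _ = (θ₂ - θ₁) * ∫ r in Ioi a, g r * r := by
        rw [Measure.volume_eq_prod, ← Measure.prod_restrict,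
          integral_prod_mul (fun r => g r * r) (fun _ => (1 : ℝ))]
        simp [hθ, mul_comm]

end Sector

theorem Ioi_prod_Ioi_subset_polarSector {x : ℝ} (hx : 0 ≤ x) :
    Ioi x ×ˢ Ioi x ⊆ polarSector (√2 * x) 0 (π / 2) := by
  rintro y ⟨hy₁ : x < y.1, hy₂ : x < y.2⟩
  have hsrc : y ∈ polarCoord.source := by rw [polarCoord_source]; exact Or.inl (hx.trans_lt hy₁)
  refine ⟨polarCoord y, ⟨?_, ?_, ?_⟩, polarCoord.left_inv hsrc⟩
  · show √2 * x < √(y.1 ^ 2 + y.2 ^ 2)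
    rw [← sqrt_sq hx, ← sqrt_mul zero_le_two]
    exact sqrt_lt_sqrt (by positivity) (by nlinarith)
  · show 0 < Complex.arg (Complex.equivRealProd.symm y)
    have him : 0 < (Complex.equivRealProd.symm y).im := by simpa using hx.trans_lt hy₂
    exact (Complex.arg_nonneg_iff.2 him.le).lt_of_ne' fun h =>
      him.ne' (Complex.arg_eq_zero_iff.1 h).2
  · show Complex.arg (Complex.equivRealProd.symm y) < π / 2
    exact Complex.arg_lt_pi_div_two_iff.2 (Or.inl (by simpa using hx.trans_lt hy₁))

theorem polarSector_subset_Ioi_prod_Ioi {x : ℝ} (hx : 0 ≤ x) :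
    polarSector (2 * x) (π / 6) (π / 3) ⊆ Ioi x ×ˢ Ioi x := by
  rintro _ ⟨⟨r, θ⟩, ⟨hr : 2 * x < r, hθ₁ : π / 6 < θ, hθ₂ : θ < π / 3⟩, rfl⟩
  have hcos : 1 / 2 < cos θ := by
    rw [← cos_pi_div_three]
    exact cos_lt_cos_of_nonneg_of_le_pi (by linarith [pi_pos]) (by linarith [pi_pos]) hθ₂
  have hsin : 1 / 2 < sin θ := by
    rw [← sin_pi_div_six]
    exact sin_lt_sin_of_lt_of_le_pi_div_two (by linarith [pi_pos]) (by linarith [pi_pos]) hθ₁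
  have hr₀ : 0 < r := by linarith
  rw [polarCoord_symm_apply]
  exact ⟨show x < r * cos θ by nlinarith, show x < r * sin θ by nlinarith⟩

section Quadrant

variable {g : ℝ → ℝ} {x : ℝ}

theorem antitoneOn_setIntegral_Ioi_mul_self (hg_nonneg : ∀ r, 0 ≤ r → 0 ≤ g r)
    (hg_int : IntegrableOn (fun r => g r * r) (Ioi 0)) :
    AntitoneOn (fun a => ∫ r in Ioi a, g r * r) (Ici 0) := by
  intro a (ha : 0 ≤ a) a' _ haa'
  refine setIntegral_mono_set (hg_int.mono_set (Ioi_subset_Ioi ha)) ?_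
    (Ioi_subset_Ioi haa').eventuallyLE
  filter_upwards [self_mem_ae_restrict measurableSet_Ioi] with r hr
  have hr₀ : 0 ≤ r := ha.trans hr.le
  exact mul_nonneg (hg_nonneg r hr₀) hr₀

theorem integrableOn_radial_Ioi_prod_Ioi (hg_int : IntegrableOn (fun r => g r * r) (Ioi 0))
    (hx : 0 ≤ x) : IntegrableOn (fun y : ℝ × ℝ => g √(y.1 ^ 2 + y.2 ^ 2)) (Ioi x ×ˢ Ioi x) :=
  (integrableOn_radial_polarSector (by positivity) (by linarith [pi_pos]) (by linarith [pi_pos])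
    (hg_int.mono_set (Ioi_subset_Ioi (by positivity)))).mono_set
      (Ioi_prod_Ioi_subset_polarSector hx)

theorem iteratedIntegral_Ioi_eq_setIntegral (hg_int : IntegrableOn (fun r => g r * r) (Ioi 0))
    (hx : 0 ≤ x) :
    ∫ y₁ in Ioi x, ∫ y₂ in Ioi x, g √(y₁ ^ 2 + y₂ ^ 2) =
      ∫ y in Ioi x ×ˢ Ioi x, g √(y.1 ^ 2 + y.2 ^ 2) :=
  (setIntegral_prod _ (integrableOn_radial_Ioi_prod_Ioi hg_int hx)).symm

theorem iteratedIntegral_Ioi_le (hg_nonneg : ∀ r, 0 ≤ r → 0 ≤ g r)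
    (hg_int : IntegrableOn (fun r => g r * r) (Ioi 0)) (hx : 0 ≤ x) :
    ∫ y₁ in Ioi x, ∫ y₂ in Ioi x, g √(y₁ ^ 2 + y₂ ^ 2) ≤
      π / 2 * ∫ r in Ioi (√2 * x), g r * r := by
  have ha : 0 ≤ √2 * x := by positivity
  calc ∫ y₁ in Ioi x, ∫ y₂ in Ioi x, g √(y₁ ^ 2 + y₂ ^ 2)
      = ∫ y in Ioi x ×ˢ Ioi x, g √(y.1 ^ 2 + y.2 ^ 2) :=
        iteratedIntegral_Ioi_eq_setIntegral hg_int hx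
    _ ≤ ∫ y in polarSector (√2 * x) 0 (π / 2), g √(y.1 ^ 2 + y.2 ^ 2) :=
        setIntegral_mono_set (integrableOn_radial_polarSector ha (by linarith [pi_pos])
          (by linarith [pi_pos]) (hg_int.mono_set (Ioi_subset_Ioi ha)))
          (.of_forall fun _ => hg_nonneg _ (sqrt_nonneg _))
          (Ioi_prod_Ioi_subset_polarSector hx).eventuallyLE
    _ = π / 2 * ∫ r in Ioi (√2 * x), g r * r := by
        rw [setIntegral_radial_polarSector ha (by linarith [pi_pos]) (by linarith [pi_pos])
          (by linarith [pi_pos]), sub_zero]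

theorem le_iteratedIntegral_Ioi (hg_nonneg : ∀ r, 0 ≤ r → 0 ≤ g r)
    (hg_int : IntegrableOn (fun r => g r * r) (Ioi 0)) (hx : 0 ≤ x) :
    π / 6 * ∫ r in Ioi (2 * x), g r * r ≤
      ∫ y₁ in Ioi x, ∫ y₂ in Ioi x, g √(y₁ ^ 2 + y₂ ^ 2) := by
  have ha : 0 ≤ 2 * x := by positivity
  calc π / 6 * ∫ r in Ioi (2 * x), g r * r
      = ∫ y in polarSector (2 * x) (π / 6) (π / 3), g √(y.1 ^ 2 + y.2 ^ 2) := by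
        rw [setIntegral_radial_polarSector ha (by linarith [pi_pos]) (by linarith [pi_pos])
          (by linarith [pi_pos])]
        ring
    _ ≤ ∫ y in Ioi x ×ˢ Ioi x, g √(y.1 ^ 2 + y.2 ^ 2) :=
        setIntegral_mono_set (integrableOn_radial_Ioi_prod_Ioi hg_int hx)
          (.of_forall fun _ => hg_nonneg _ (sqrt_nonneg _))
          (polarSector_subset_Ioi_prod_Ioi hx).eventuallyLE
    _ = ∫ y₁ in Ioi x, ∫ y₂ in Ioi x, g √(y₁ ^ 2 + y₂ ^ 2) :=
        (iteratedIntegral_Ioi_eq_setIntegral hg_int hx).symm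

end Quadrant

theorem eventually_mul_exp_neg_lt_exp_neg_mul {β ε : ℝ} (hβ : 0 < β) (hε : 0 < ε) (C : ℝ) :
    ∀ᶠ t in atTop, C * exp (-β * t) < exp (-β * ((1 - ε) * t)) := by
  filter_upwards [(tendsto_exp_atTop.comp
    (tendsto_id.const_mul_atTop (mul_pos hβ hε))).eventually_gt_atTop C] with t ht
  have hsplit : exp (-β * ((1 - ε) * t)) = exp (β * ε * t) * exp (-β * t) := by
    rw [← exp_add]; ring_nf
  rw [hsplit]
  exact mul_lt_mul_of_pos_right ht (exp_pos _)

theorem two_dim_front_estimate_general (b X μ : ℝ → ℝ) (β : ℝ)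
    (hβ : 0 < β)
    (hb_nonneg : ∀ r, 0 ≤ r → 0 ≤ b r)
    (hb_int : IntegrableOn (fun r => b r * r) (Set.Ioi (0 : ℝ)))
    (hX_top : Tendsto X atTop atTop)
    (hX : ∀ᶠ t in atTop,
      (∫ y₁ in Set.Ioi (X t), ∫ y₂ in Set.Ioi (X t),
        b (Real.sqrt (y₁ ^ 2 + y₂ ^ 2))) = Real.exp (-β * t))
    (c : ℝ → ℝ)
    (hc : ∀ x, c x = (Real.pi / 2) * ∫ r in Set.Ioi (Real.sqrt 2 * x), b r * r)
    (hc_anti : StrictAntiOn c (Set.Ici 0))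
    (hμ_nonneg : ∀ᶠ t in atTop, 0 ≤ μ t)
    (hμ : ∀ᶠ t in atTop, c (μ t) = Real.exp (-β * t)) :
    ∀ ε ∈ Set.Ioo (0 : ℝ) 1, ∀ᶠ t in atTop,
      X t ≤ μ t ∧ (1 / 2) * μ ((1 - ε) * t) ≤ X t := by
  intro ε hε
  have hshift : Tendsto (fun t => (1 - ε) * t) atTop atTop :=
    tendsto_id.const_mul_atTop (by linarith [hε.2])
  filter_upwards [hX, hμ, hμ_nonneg, hshift.eventually hμ, hX_top.eventually_ge_atTop 0,
    eventually_mul_exp_neg_lt_exp_neg_mul hβ hε.1 3] with t hXt hμt hμt₀ hμε hXt₀ hgap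
  refine ⟨(hc_anti.le_iff_ge hμt₀ hXt₀).1 ?_, ?_⟩
  · rw [hμt, ← hXt, hc]
    exact iteratedIntegral_Ioi_le hb_nonneg hb_int hXt₀
  · by_contra! hlt
    have h2X : 2 * X t ≤ √2 * μ ((1 - ε) * t) := by
      nlinarith [one_lt_sqrt_two]
    refine hgap.not_ge ?_
    calc exp (-β * ((1 - ε) * t)) = π / 2 * ∫ r in Ioi (√2 * μ ((1 - ε) * t)), b r * r := by
          rw [← hμε, hc]
      _ ≤ π / 2 * ∫ r in Ioi (2 * X t), b r * r := by
          gcongr π / 2 * ?_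
          have h2X₀ : 0 ≤ 2 * X t := by positivity
          exact antitoneOn_setIntegral_Ioi_mul_self hb_nonneg hb_int h2X₀ (h2X₀.trans h2X) h2X
      _ = 3 * (π / 6 * ∫ r in Ioi (2 * X t), b r * r) := by ring
      _ ≤ 3 * exp (-β * t) := by
          rw [← hXt]
          gcongr 3 * ?_
          exact le_iteratedIntegral_Ioi hb_nonneg hb_int hXt₀

theorem two_dim_front_estimate (b X μ : ℝ → ℝ) (β R₀ : ℝ)
    (hβ : 0 < β)
    (hb_nonneg : ∀ r, 0 ≤ r → 0 ≤ b r)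
    (hb_anti : AntitoneOn b (Set.Ici R₀))
    (hb_int : IntegrableOn (fun r => b r * r) (Set.Ioi (0 : ℝ)))
    (hX_top : Tendsto X atTop atTop)
    (hX : ∀ᶠ t in atTop,
      (∫ y₁ in Set.Ioi (X t), ∫ y₂ in Set.Ioi (X t),
        b (Real.sqrt (y₁ ^ 2 + y₂ ^ 2))) = Real.exp (-β * t))
    (c : ℝ → ℝ)
    (hc : ∀ x, c x = (Real.pi / 2) * ∫ r in Set.Ioi (Real.sqrt 2 * x), b r * r)
    (hc_anti : StrictAntiOn c (Set.Ici 0))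
    (hμ_nonneg : ∀ᶠ t in atTop, 0 ≤ μ t)
    (hμ : ∀ᶠ t in atTop, c (μ t) = Real.exp (-β * t)) :
    ∀ ε ∈ Set.Ioo (0 : ℝ) 1, ∀ᶠ t in atTop,
      X t ≤ μ t ∧ (1 / 2) * μ ((1 - ε) * t) ≤ X t :=
  two_dim_front_estimate_general b X μ β hβ hb_nonneg hb_int hX_top hX c hc hc_anti hμ_nonneg hμ
end
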